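/- arXiv:2202.02241 — 2 statements merged into one kernel-verified Lean document; each statement's English description precedes it below -/
import Mathlib

section
/- Consider a feed-forward ReLU network π: ℝ^{n_u} → ℝ^{n_y} defined by x⁰ = u, v^k = W^k x^k + b^k and x^{k+1} = ReLU(v^k) componentwise for k = 0,…,ℓ−1, and π(u) = W^ℓ x^ℓ + b^ℓ, with input set U = {u ∈ ℝ^{n_u} : u̲ ≤ u ≤ ū} (componentwise). Regard (u, x¹, …, x^ℓ) as polynomial variables and form the constraint polynomials: the input inequalities u_j − u̲_j ≥ 0 and ū_j − u_j ≥ 0; for each hidden node the two ReLU inequalities x^{k+1}_j ≥ 0 and x^{k+1}_j − (W^k x^k + b^k)_j ≥ 0; and the equality x^{k+1}_j · (x^{k+1}_j − (W^k x^k + b^k)_j) = 0. Fix c ∈ ℝ^{n_y} and γ ∈ ℝ. If there exist sum-of-squares polynomials s_i (one per inequality constraint g_i) and arbitrary polynomials t_j (one per equality constraint h_j) such that γ − cᵀ(W^ℓ x^ℓ + b^ℓ) − Σ_i s_i g_i − Σ_j t_j h_j is a sum of squares, then cᵀπ(u) ≤ γ for every u ∈ U. -/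
open MvPolynomial Finset

/-- A multivariate real polynomial is a sum of squares if it is a finite sum of
squares of polynomials. -/
def IsSOS {σ : Type*} (p : MvPolynomial σ ℝ) : Prop :=
  ∃ (k : ℕ) (r : Fin k → MvPolynomial σ ℝ), p = ∑ i, (r i) ^ 2

/-- The values of the layers of a feed-forward ReLU network: `nsz k` is the number of
neurons in layer `k`, `W k j i` and `b k j` are the weights and biases of the affine
map from layer `k` to layer `k+1`, and `u` is the input.  `netX nsz W b u k j` is the
value `x^k_j` of node `j` in layer `k`. -/
noncomputable def netX (nsz : ℕ → ℕ) (W : ℕ → ℕ → ℕ → ℝ) (b : ℕ → ℕ → ℝ)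
    (u : ℕ → ℝ) : ℕ → ℕ → ℝ
  | 0, j => u j
  | k + 1, j => max ((∑ i ∈ Finset.range (nsz k), W k j i * netX nsz W b u k i) + b k j) 0

/-- The pre-activation value of node `j` in the transition out of layer `k`, viewed as a
polynomial in the network variables: variable `(k, i)` stands for `x^k_i`. -/
noncomputable def preact (nsz : ℕ → ℕ) (W : ℕ → ℕ → ℕ → ℝ) (b : ℕ → ℕ → ℝ)
    (k j : ℕ) : MvPolynomial (ℕ × ℕ) ℝ :=
  (∑ i ∈ Finset.range (nsz k), C (W k j i) * X (k, i)) + C (b k j)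

/-- End-to-end soundness of the Positivstellensatz-based verification of a feed-forward
ReLU network with `ℓ` hidden activation layers and `ny` outputs.  If there is an SOS
certificate built from the input constraints `u_j − u̲_j ≥ 0`, `ū_j − u_j ≥ 0`, the ReLU
inequalities `x^{k+1}_j ≥ 0`, `x^{k+1}_j − (W^k x^k + b^k)_j ≥ 0` and the ReLU equality
`x^{k+1}_j (x^{k+1}_j − (W^k x^k + b^k)_j) = 0`, then `cᵀπ(u) ≤ γ` for every admissible
input `u`. -/
theorem relu_network_psatz_sound (ℓ ny : ℕ) (nsz : ℕ → ℕ)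
    (W : ℕ → ℕ → ℕ → ℝ) (b : ℕ → ℕ → ℝ) (lb ub : ℕ → ℝ) (c : ℕ → ℝ) (γ : ℝ)
    (sa sb : ℕ → MvPolynomial (ℕ × ℕ) ℝ)
    (s1 s2 t : ℕ → ℕ → MvPolynomial (ℕ × ℕ) ℝ)
    (hsa : ∀ j, IsSOS (sa j)) (hsb : ∀ j, IsSOS (sb j))
    (hs1 : ∀ k j, IsSOS (s1 k j)) (hs2 : ∀ k j, IsSOS (s2 k j))
    (hcert : IsSOS (
      C γ - (∑ i ∈ range ny, C (c i) * preact nsz W b ℓ i)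
        - (∑ j ∈ range (nsz 0),
            (sa j * (X (0, j) - C (lb j)) + sb j * (C (ub j) - X (0, j))))
        - ∑ k ∈ range ℓ, ∑ j ∈ range (nsz (k + 1)),
            (s1 k j * X (k + 1, j)
              + s2 k j * (X (k + 1, j) - preact nsz W b k j)
              + t k j * (X (k + 1, j) * (X (k + 1, j) - preact nsz W b k j))))) :
    ∀ u : ℕ → ℝ, (∀ j < nsz 0, lb j ≤ u j ∧ u j ≤ ub j) →
      ∑ i ∈ range ny,
          c i * ((∑ j ∈ range (nsz ℓ), W ℓ i j * netX nsz W b u ℓ j) + b ℓ i) ≤ γ := by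
  intro u hu
  classical
  set v : ℕ × ℕ → ℝ := fun p => netX nsz W b u p.1 p.2 with hv
  have hSOS : ∀ p : MvPolynomial (ℕ × ℕ) ℝ, IsSOS p → 0 ≤ eval v p := by
    rintro p ⟨k, r, rfl⟩
    rw [map_sum]
    exact Finset.sum_nonneg fun i _ => by rw [map_pow]; exact sq_nonneg _
  have hpre : ∀ k j, eval v (preact nsz W b k j)
      = (∑ i ∈ range (nsz k), W k j i * netX nsz W b u k i) + b k j := by
    intro k j
    simp [preact, hv]
  have hxv : ∀ k j, v (k + 1, j) = max (eval v (preact nsz W b k j)) 0 := by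
    intro k j
    rw [hpre]
    rfl
  have h0 := hSOS _ hcert
  rw [map_sub, map_sub, map_sub, eval_C] at h0
  have hB : 0 ≤ eval v (∑ j ∈ range (nsz 0),
      (sa j * (X (0, j) - C (lb j)) + sb j * (C (ub j) - X (0, j)))) := by
    rw [map_sum]
    refine Finset.sum_nonneg fun j hj => ?_
    obtain ⟨h1, h2⟩ := hu j (mem_range.mp hj)
    have hv0 : eval v (X ((0 : ℕ), j)) = u j := by rw [eval_X]; rfl
    rw [map_add, map_mul, map_mul, map_sub, map_sub, hv0, eval_C, eval_C]
    exact add_nonneg (mul_nonneg (hSOS _ (hsa j)) (by linarith))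
      (mul_nonneg (hSOS _ (hsb j)) (by linarith))
  have hC : 0 ≤ eval v (∑ k ∈ range ℓ, ∑ j ∈ range (nsz (k + 1)),
      (s1 k j * X (k + 1, j) + s2 k j * (X (k + 1, j) - preact nsz W b k j)
        + t k j * (X (k + 1, j) * (X (k + 1, j) - preact nsz W b k j)))) := by
    rw [map_sum]
    refine Finset.sum_nonneg fun k _ => ?_
    rw [map_sum]
    refine Finset.sum_nonneg fun j _ => ?_
    rw [map_add, map_add, map_mul, map_mul, map_mul, map_sub, map_mul, map_sub, eval_X]
    have hx := hxv k j
    set a := eval v (preact nsz W b k j) with ha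
    have h1 : 0 ≤ v (k + 1, j) := by rw [hx]; exact le_max_right _ _
    have h2 : 0 ≤ v (k + 1, j) - a := by
      rw [hx]; exact sub_nonneg.mpr (le_max_left a 0)
    have h3 : v (k + 1, j) * (v (k + 1, j) - a) = 0 := by
      rw [hx]
      rcases le_or_gt 0 a with h | h
      · rw [max_eq_left h]; ring
      · rw [max_eq_right h.le]; ring
    rw [h3, mul_zero, add_zero]
    exact add_nonneg (mul_nonneg (hSOS _ (hs1 k j)) h1)
      (mul_nonneg (hSOS _ (hs2 k j)) h2)
  have hP : eval v (∑ i ∈ range ny, C (c i) * preact nsz W b ℓ i)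
      = ∑ i ∈ range ny,
          c i * ((∑ j ∈ range (nsz ℓ), W ℓ i j * netX nsz W b u ℓ j) + b ℓ i) := by
    rw [map_sum]
    exact Finset.sum_congr rfl fun i _ => by rw [map_mul, eval_C, hpre]
  rw [hP] at h0
  linarith
end

section
/- The sigmoid function satisfies the sector constraint in the sector [0, 1/4] about the point (0, 1/2): for every x ∈ ℝ, (sig(x) − 1/2)·((x/4 + 1/2) − sig(x)) ≥ 0, where sig(x) = 1/(1 + e^{−x}). -/
/-!
Both `sig x - 1/2` and `x/4 + 1/2 - sig x` vanish at `0` and are increasing, the second because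
`sig' = sig (1 - sig) ≤ 1/4`. For monotone `f`, `g` one has `0 ≤ (f x - f 0) * (g x - g 0)`.
-/

open Real

lemma mul_one_sub_le_quarter {K : Type*} [Field K] [LinearOrder K] [IsStrictOrderedRing K]
    (s : K) : s * (1 - s) ≤ 1 / 4 := by
  nlinarith [sq_nonneg (s - 1 / 2)]

lemma monotone_div_four_sub_sigmoid : Monotone fun x ↦ x / 4 - sigmoid x :=
  monotone_of_hasDerivAt_nonneg
    (fun x ↦ ((hasDerivAt_id x).div_const 4).sub (hasDerivAt_sigmoid x))
    fun x ↦ sub_nonneg.mpr (mul_one_sub_le_quarter (sigmoid x))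

/-- The sigmoid function satisfies the sector constraint in the sector [0, 1/4]
about the point (0, 1/2). -/
theorem sigmoid_sector_constraint (x : ℝ) :
    0 ≤ (1 / (1 + Real.exp (-x)) - 1 / 2) * ((x / 4 + 1 / 2) - 1 / (1 + Real.exp (-x))) := by
  have h := (sigmoid_monotone.monovary monotone_div_four_sub_sigmoid).sub_mul_sub_nonneg 0 x
  rw [sigmoid_zero, sigmoid_def] at h
  simp only [one_div]
  exact h.trans_eq (by ring)
end
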